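/- Let G_D be a directed graph in which every vertex has in-degree at most one, and let G_U be its underlying undirected graph. Then no two vertex-disjoint cycles of G_U lie in the same connected component of G_U. -/

import Mathlib

/-!
Every vertex of a cycle `C` of `G_U` has its unique in-neighbour on `C`: the `n` edges of `C` have
pairwise distinct heads (an edge is determined by its head), and `C` has only `n` vertices.
Consequently the vertices reachable from `C` by directed paths form a set closed under undirected
adjacency, i.e. containing the whole component of `C`; and a vertex with a directed path into
another cycle `C'` lies on `C'`. So any vertex of a cycle `C'` in the component of `C` is reached
from some vertex of `C`, which must then lie on `C'` as well.
-/

section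

variable {V : Type*}

def PredClosed (D : V → V → Prop) (C : Set V) : Prop :=
  ∀ v ∈ C, ∃ u ∈ C, D u v

namespace PredClosed

variable {D : V → V → Prop} {C : Set V}

theorem mem_of_reflTransGen (hdeg : ∀ v, {u | D u v}.Subsingleton) (hC : PredClosed D C)
    {w v : V} (hwv : Relation.ReflTransGen D w v) (hv : v ∈ C) : w ∈ C := by
  induction hwv with
  | refl => exact hv
  | tail _ hzv ih =>
    obtain ⟨u, hu, huv⟩ := hC _ hv
    exact ih (hdeg _ huv hzv ▸ hu)

theorem exists_reflTransGen_of_symmGen (hdeg : ∀ v, {u | D u v}.Subsingleton)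
    (hC : PredClosed D C) {x y : V} (hx : ∃ w ∈ C, Relation.ReflTransGen D w x)
    (hxy : Relation.SymmGen D x y) : ∃ w ∈ C, Relation.ReflTransGen D w y := by
  obtain ⟨w, hw, hwx⟩ := hx
  rcases hxy with hxy | hyx
  · exact ⟨w, hw, hwx.tail hxy⟩
  -- `y` is the only possible last step of a directed path ending at `x`
  · rcases hwx.cases_tail with rfl | ⟨z, hwz, hzx⟩
    · obtain ⟨u, hu, hux⟩ := hC _ hw
      exact ⟨y, hdeg _ hux hyx ▸ hu, .refl⟩
    · exact ⟨w, hw, hdeg _ hzx hyx ▸ hwz⟩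

end PredClosed

theorem SimpleGraph.Reachable.mem_of_forall_adj {G : SimpleGraph V} {S : Set V}
    (hS : ∀ x y, G.Adj x y → x ∈ S → y ∈ S) {x y : V} (h : G.Reachable x y) (hx : x ∈ S) :
    y ∈ S := by
  have hxy := (reachable_iff_reflTransGen x y).1 h
  clear h
  induction hxy with
  | refl => exact hx
  | tail _ hab ih => exact hS _ _ hab ih

theorem SimpleGraph.Walk.IsCycle.predClosed_support {D : V → V → Prop} {G : SimpleGraph V}
    (hdeg : ∀ v, {u | D u v}.Subsingleton) (hG : ∀ u v, G.Adj u v → Relation.SymmGen D u v)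
    {a : V} {c : G.Walk a a} (hc : c.IsCycle) : PredClosed D {v | v ∈ c.support} := by
  classical
  set hit := c.support.toFinset.filter fun v => ∃ u ∈ c.support, D u v
  have hedges : c.edges.toFinset.card ≤ hit.card := by
    refine Finset.card_le_card_of_forall_subsingleton (fun e v => ∃ u, e = s(u, v) ∧ D u v)
      ?_ ?_
    · intro e he
      rw [List.mem_toFinset] at he
      induction e using Sym2.inductionOn with
      | hf x y =>
        have hx := c.fst_mem_support_of_mem_edges he
        have hy := c.snd_mem_support_of_mem_edges he
        rcases hG x y (c.adj_of_mem_edges he) with hxy | hyx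
        · exact ⟨y, Finset.mem_filter.2 ⟨List.mem_toFinset.2 hy, x, hx, hxy⟩, x, rfl, hxy⟩
        · exact ⟨x, Finset.mem_filter.2 ⟨List.mem_toFinset.2 hx, y, hy, hyx⟩, y, Sym2.eq_swap, hyx⟩
    · rintro v - e₁ ⟨-, u₁, rfl, hu₁⟩ e₂ ⟨-, u₂, rfl, hu₂⟩
      rw [hdeg v hu₁ hu₂]
  have hsupport : c.support.toFinset.card ≤ c.edges.toFinset.card := by
    rw [List.toFinset_card_of_nodup hc.edges_nodup, c.length_edges,
      ← c.cons_tail_support, List.toFinset_cons,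
      Finset.insert_eq_of_mem (List.mem_toFinset.2 (c.end_mem_tail_support hc.not_nil))]
    refine (List.toFinset_card_le _).trans ?_
    simp
  have hall : hit = c.support.toFinset :=
    Finset.eq_of_subset_of_card_le (Finset.filter_subset _ _) (hsupport.trans hedges)
  intro v hv
  have hv : v ∈ hit := hall ▸ List.mem_toFinset.2 hv
  exact (Finset.mem_filter.1 hv).2

end

theorem stmt2_general {V : Type*} (D : V → V → Prop)
    (hdeg : ∀ v : V, {u : V | D u v}.Subsingleton)
    (G : SimpleGraph V)
    (hG : ∀ u v, G.Adj u v ↔ u ≠ v ∧ (D u v ∨ D v u))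
    (a b : V) (c₁ : G.Walk a a) (c₂ : G.Walk b b)
    (h₁ : c₁.IsCycle) (h₂ : c₂.IsCycle)
    (hdisj : ∀ v : V, v ∈ c₁.support → v ∈ c₂.support → False)
    (hreach : G.Reachable a b) : False := by
  have hDG : ∀ u v, G.Adj u v → Relation.SymmGen D u v := fun u v h => ((hG u v).1 h).2
  have hC₁ := h₁.predClosed_support hdeg hDG
  have hC₂ := h₂.predClosed_support hdeg hDG
  obtain ⟨w, hw₂, hwa⟩ : ∃ w ∈ {v | v ∈ c₂.support}, Relation.ReflTransGen D w a :=
    hreach.symm.mem_of_forall_adj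
      (fun x y hxy hx => hC₂.exists_reflTransGen_of_symmGen hdeg hx (hDG x y hxy))
      ⟨b, c₂.start_mem_support, .refl⟩
  exact hdisj w (hC₁.mem_of_reflTransGen hdeg hwa c₁.start_mem_support) hw₂

/-- In the underlying undirected graph of a digraph with in-degree at most one,
no two vertex-disjoint cycles lie in the same connected component. -/
theorem stmt2 {V : Type*} [Fintype V] (D : V → V → Prop)
    (hdeg : ∀ v : V, {u : V | D u v}.Subsingleton)
    (G : SimpleGraph V)
    (hG : ∀ u v, G.Adj u v ↔ u ≠ v ∧ (D u v ∨ D v u))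
    (a b : V) (c₁ : G.Walk a a) (c₂ : G.Walk b b)
    (h₁ : c₁.IsCycle) (h₂ : c₂.IsCycle)
    (hdisj : ∀ v : V, v ∈ c₁.support → v ∈ c₂.support → False)
    (hreach : G.Reachable a b) : False :=
  stmt2_general D hdeg G hG a b c₁ c₂ h₁ h₂ hdisj hreach
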